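/- arXiv:1506.03743 — 2 statements merged into one kernel-verified Lean document; each statement's English description precedes it below -/
import Mathlib

section
/- Let φ : U → ℝ³ be as in the setup (smooth immersion with positively oriented unit normal N, coordinates z = x+iy conformal for the positive definite second fundamental form, positive extrinsic curvature K). If the extrinsic curvature K is a positive constant, then the unit normal N : U → S² ⊆ ℝ³ satisfies the harmonic map equation N × (Nₓₓ + Nᵧᵧ) = 0 on U, where × is the standard cross product of ℝ³; that is, N is a harmonic map into S² for the conformal structure induced by the second fundamental form. -/
noncomputable section

open scoped Matrix

/-- Partial derivative in the `x` direction. -/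
def pdx {E : Type*} [NormedAddCommGroup E] [NormedSpace ℝ E] (f : ℝ × ℝ → E) (p : ℝ × ℝ) : E :=
  fderiv ℝ f p (1, 0)

/-- Partial derivative in the `y` direction. -/
def pdy {E : Type*} [NormedAddCommGroup E] [NormedSpace ℝ E] (f : ℝ × ℝ → E) (p : ℝ × ℝ) : E :=
  fderiv ℝ f p (0, 1)

/-- Standard inner product on ℝ³. -/
def dot3 (a b : Fin 3 → ℝ) : ℝ := ∑ i, a i * b i

/-! ### Algebraic lemmas about `dot3` and the cross product -/

lemma dot3_comm (a b : Fin 3 → ℝ) : dot3 a b = dot3 b a := by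
  simp [dot3, Fin.sum_univ_three]; ring

lemma dot3_sub_left (x y z : Fin 3 → ℝ) : dot3 (x - y) z = dot3 x z - dot3 y z := by
  simp [dot3, Fin.sum_univ_three]; ring

lemma dot3_smul_left (r : ℝ) (x z : Fin 3 → ℝ) : dot3 (r • x) z = r * dot3 x z := by
  simp [dot3, Fin.sum_univ_three]; ring

lemma cross_dot_self_left (a b : Fin 3 → ℝ) : dot3 (a ⨯₃ b) a = 0 := by
  simp [dot3, crossProduct, Fin.sum_univ_three]; ring

lemma cross_dot_self_right (a b : Fin 3 → ℝ) : dot3 (a ⨯₃ b) b = 0 := by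
  simp [dot3, crossProduct, Fin.sum_univ_three]; ring

lemma cross_dot₁ (n a b : Fin 3 → ℝ) : dot3 (n ⨯₃ b) a = -dot3 n (a ⨯₃ b) := by
  simp [dot3, crossProduct, Fin.sum_univ_three]; ring

lemma cross_dot₂ (n a b : Fin 3 → ℝ) : dot3 (n ⨯₃ a) b = dot3 n (a ⨯₃ b) := by
  simp [dot3, crossProduct, Fin.sum_univ_three]; ring

lemma lagrange3 (a b : Fin 3 → ℝ) :
    dot3 (a ⨯₃ b) (a ⨯₃ b) = dot3 a a * dot3 b b - dot3 a b ^ 2 := by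
  simp [dot3, crossProduct, Fin.sum_univ_three]; ring

lemma cross_smul_left (r : ℝ) (x y : Fin 3 → ℝ) : (r • x) ⨯₃ y = r • (x ⨯₃ y) := by
  funext i; fin_cases i <;> simp [crossProduct] <;> ring

lemma final_alg (n a b : Fin 3 → ℝ) (c : ℝ) (ha : dot3 n a = 0) (hb : dot3 n b = 0) :
    n ⨯₃ (c • ((c • (n ⨯₃ b)) ⨯₃ b) + c • ((c • (n ⨯₃ a)) ⨯₃ a)) = 0 := by
  simp only [dot3, Fin.sum_univ_three] at ha hb
  funext i
  fin_cases i
  · simp [crossProduct, Fin.sum_univ_three]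
    linear_combination c^2*(n 1 * b 2 - n 2 * b 1)*hb + c^2*(n 1 * a 2 - n 2 * a 1)*ha
  · simp [crossProduct, Fin.sum_univ_three]
    linear_combination c^2*(n 2 * b 0 - n 0 * b 2)*hb + c^2*(n 2 * a 0 - n 0 * a 2)*ha
  · simp [crossProduct, Fin.sum_univ_three]
    linear_combination c^2*(n 0 * b 1 - n 1 * b 0)*hb + c^2*(n 0 * a 1 - n 1 * a 0)*ha

/-- A vector orthogonal to a positively-oriented frame is zero. -/
lemma eq_zero_of_dots (n a b v : Fin 3 → ℝ) (hdet : dot3 n (a ⨯₃ b) ≠ 0)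
    (h1 : dot3 v n = 0) (h2 : dot3 v a = 0) (h3 : dot3 v b = 0) : v = 0 := by
  have hdet' : (Matrix.of ![n, a, b]).det ≠ 0 := by
    intro h; apply hdet
    rw [Matrix.det_fin_three] at h
    simp only [dot3, crossProduct, Fin.sum_univ_three] at *
    simp [Matrix.of_apply] at h ⊢
    linarith [h]
  apply Matrix.eq_zero_of_mulVec_eq_zero hdet'
  funext i
  fin_cases i <;>
    · simp only [Matrix.mulVec, dotProduct, Fin.sum_univ_three, Matrix.of_apply]
      simp only [dot3, Fin.sum_univ_three] at h1 h2 h3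
      simp
      linarith [h1, h2, h3]

/-! ### Continuous bilinear maps -/

def dot3L : (Fin 3 → ℝ) →ₗ[ℝ] (Fin 3 → ℝ) →ₗ[ℝ] ℝ :=
  LinearMap.mk₂ ℝ dot3
    (by intro a b c; simp [dot3, add_mul, Finset.sum_add_distrib])
    (by intro r a b; simp [dot3, Finset.mul_sum, mul_assoc])
    (by intro a b c; simp [dot3, mul_add, Finset.sum_add_distrib])
    (by intro r a b; simp [dot3, Finset.mul_sum]
        exact Finset.sum_congr rfl fun i _ => by ring)

def mkCLM2 {W : Type*} [NormedAddCommGroup W] [NormedSpace ℝ W]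
    (B : (Fin 3 → ℝ) →ₗ[ℝ] (Fin 3 → ℝ) →ₗ[ℝ] W) :
    (Fin 3 → ℝ) →L[ℝ] (Fin 3 → ℝ) →L[ℝ] W :=
  LinearMap.toContinuousLinearMap
    ((LinearMap.toContinuousLinearMap : ((Fin 3 → ℝ) →ₗ[ℝ] W) ≃ₗ[ℝ] _).toLinearMap ∘ₗ B)

def dotC : (Fin 3 → ℝ) →L[ℝ] (Fin 3 → ℝ) →L[ℝ] ℝ := mkCLM2 dot3L
def crossC : (Fin 3 → ℝ) →L[ℝ] (Fin 3 → ℝ) →L[ℝ] (Fin 3 → ℝ) := mkCLM2 crossProduct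

@[simp] lemma dotC_apply (a b : Fin 3 → ℝ) : dotC a b = dot3 a b := rfl
@[simp] lemma crossC_apply (a b : Fin 3 → ℝ) : crossC a b = a ⨯₃ b := rfl

/-! ### Calculus lemmas -/

section Calc

variable {E : Type*} [NormedAddCommGroup E] [NormedSpace ℝ E]
variable {W : Type*} [NormedAddCommGroup W] [NormedSpace ℝ W]

lemma fderiv_bilin (B : (Fin 3 → ℝ) →L[ℝ] (Fin 3 → ℝ) →L[ℝ] W)
    {f g : ℝ × ℝ → Fin 3 → ℝ} {p : ℝ × ℝ}
    (hf : DifferentiableAt ℝ f p) (hg : DifferentiableAt ℝ g p) (v : ℝ × ℝ) :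
    fderiv ℝ (fun q => B (f q) (g q)) p v
      = B (fderiv ℝ f p v) (g p) + B (f p) (fderiv ℝ g p v) := by
  have hc : DifferentiableAt ℝ (fun q => B (f q)) p :=
    (B.differentiable.differentiableAt).comp p hf
  rw [fderiv_clm_apply hc hg]
  have hcd : fderiv ℝ (fun q => B (f q)) p = B.comp (fderiv ℝ f p) := by
    rw [show (fun q => B (f q)) = ⇑B ∘ f from rfl,
      fderiv_comp p B.differentiable.differentiableAt hf, B.fderiv]
  simp [hcd]
  abel

lemma fderiv_dot3 {f g : ℝ × ℝ → Fin 3 → ℝ} {p : ℝ × ℝ}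
    (hf : DifferentiableAt ℝ f p) (hg : DifferentiableAt ℝ g p) (v : ℝ × ℝ) :
    fderiv ℝ (fun q => dot3 (f q) (g q)) p v
      = dot3 (fderiv ℝ f p v) (g p) + dot3 (f p) (fderiv ℝ g p v) := by
  simpa using fderiv_bilin dotC hf hg v

lemma pd_differentiableAt {f : ℝ × ℝ → E} {p : ℝ × ℝ} (hf : ContDiffAt ℝ (⊤ : ℕ∞) f p) (v : ℝ × ℝ) :
    DifferentiableAt ℝ (fun q => fderiv ℝ f q v) p :=
  ((hf.fderiv_right (m := 1) ((by exact WithTop.coe_le_coe.2 le_top))).clm_apply contDiffAt_const).differentiableAt one_ne_zero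

lemma pdx_differentiableAt {f : ℝ × ℝ → E} {p : ℝ × ℝ} (hf : ContDiffAt ℝ (⊤ : ℕ∞) f p) :
    DifferentiableAt ℝ (pdx f) p := pd_differentiableAt hf (1, 0)

lemma pdy_differentiableAt {f : ℝ × ℝ → E} {p : ℝ × ℝ} (hf : ContDiffAt ℝ (⊤ : ℕ∞) f p) :
    DifferentiableAt ℝ (pdy f) p := pd_differentiableAt hf (0, 1)

lemma clairaut {f : ℝ × ℝ → E} {p : ℝ × ℝ} (hf : ContDiffAt ℝ (⊤ : ℕ∞) f p) :
    pdx (pdy f) p = pdy (pdx f) p := by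
  have hd : DifferentiableAt ℝ (fderiv ℝ f) p :=
    (hf.fderiv_right (m := 1) (by exact WithTop.coe_le_coe.2 le_top)).differentiableAt one_ne_zero
  have hsymm := hf.isSymmSndFDerivAt (by rw [minSmoothness_of_isRCLikeNormedField]; exact WithTop.coe_le_coe.2 le_top)
  have h1 : ∀ v w : ℝ × ℝ, fderiv ℝ (fun q => fderiv ℝ f q v) p w
      = fderiv ℝ (fderiv ℝ f) p w v := by
    intro v w
    rw [fderiv_clm_apply hd (differentiableAt_const v)]
    simp
  unfold pdx pdy
  rw [h1, h1, hsymm]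

lemma pd_const_on {f : ℝ × ℝ → E} {U : Set (ℝ × ℝ)} (hU : IsOpen U) {p : ℝ × ℝ}
    (hp : p ∈ U) (c0 : E) (h : ∀ q ∈ U, f q = c0) (v : ℝ × ℝ) :
    fderiv ℝ f p v = 0 := by
  have he : f =ᶠ[nhds p] fun _ => c0 := Filter.eventuallyEq_of_mem (hU.mem_nhds hp) h
  rw [he.fderiv_eq]; simp

end Calc

theorem stmt1
    (U : Set (ℝ × ℝ)) (hUopen : IsOpen U) (hUconn : IsConnected U)
    (φ N : ℝ × ℝ → Fin 3 → ℝ)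
    (hφ : ContDiffOn ℝ (⊤ : ℕ∞) φ U) (hN : ContDiffOn ℝ (⊤ : ℕ∞) N U)
    (himm : ∀ p ∈ U, LinearIndependent ℝ ![pdx φ p, pdy φ p])
    (hNunit : ∀ p ∈ U, dot3 (N p) (N p) = 1)
    (hNφx : ∀ p ∈ U, dot3 (N p) (pdx φ p) = 0)
    (hNφy : ∀ p ∈ U, dot3 (N p) (pdy φ p) = 0)
    (horient : ∀ p ∈ U, 0 < dot3 (N p) (pdx φ p ⨯₃ pdy φ p))
    -- z is a conformal parameter for the second fundamental form: f ≡ 0, e = g₂ > 0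
    (hf : ∀ p ∈ U, -dot3 (pdx N p) (pdy φ p) = 0)
    (heg : ∀ p ∈ U, -dot3 (pdx N p) (pdx φ p) = -dot3 (pdy N p) (pdy φ p))
    (hepos : ∀ p ∈ U, 0 < -dot3 (pdx N p) (pdx φ p))
    -- the extrinsic curvature is a positive constant K
    (K : ℝ) (hKpos : 0 < K)
    (hK : ∀ p ∈ U,
      ((-dot3 (pdx N p) (pdx φ p)) * (-dot3 (pdy N p) (pdy φ p))
          - (-dot3 (pdx N p) (pdy φ p)) ^ 2) /
        (dot3 (pdx φ p) (pdx φ p) * dot3 (pdy φ p) (pdy φ p)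
          - (dot3 (pdx φ p) (pdy φ p)) ^ 2) = K) :
    -- N is a harmonic map into S² for the conformal structure of the second fundamental form
    ∀ p ∈ U, N p ⨯₃ (pdx (pdx N) p + pdy (pdy N) p) = 0 := by
  intro p hp
  set c : ℝ := Real.sqrt K with hcdef
  have hcpos : 0 < c := Real.sqrt_pos.2 hKpos
  -- basic regularity
  have hNc : ∀ q ∈ U, ContDiffAt ℝ (⊤ : ℕ∞) N q := fun q hq => hN.contDiffAt (hUopen.mem_nhds hq)
  have hφc : ∀ q ∈ U, ContDiffAt ℝ (⊤ : ℕ∞) φ q := fun q hq => hφ.contDiffAt (hUopen.mem_nhds hq)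
  have hNd : ∀ q ∈ U, DifferentiableAt ℝ N q := fun q hq => (hNc q hq).differentiableAt (by simp)
  have hφd : ∀ q ∈ U, DifferentiableAt ℝ φ q := fun q hq => (hφc q hq).differentiableAt (by simp)
  -- N ⊥ its derivatives
  have hNvN : ∀ q ∈ U, ∀ v, dot3 (fderiv ℝ N q v) (N q) = 0 := by
    intro q hq v
    have h0 : fderiv ℝ (fun r => dot3 (N r) (N r)) q v = 0 :=
      pd_const_on hUopen hq 1 hNunit v
    rw [fderiv_dot3 (hNd q hq) (hNd q hq) v] at h0
    have := dot3_comm (N q) (fderiv ℝ N q v)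
    linarith
  have hNxN : ∀ q ∈ U, dot3 (pdx N q) (N q) = 0 := fun q hq => hNvN q hq (1, 0)
  have hNyN : ∀ q ∈ U, dot3 (pdy N q) (N q) = 0 := fun q hq => hNvN q hq (0, 1)
  -- symmetry of the second fundamental form coefficient f
  have hNyφx : ∀ q ∈ U, dot3 (pdy N q) (pdx φ q) = 0 := by
    intro q hq
    have h1 : fderiv ℝ (fun r => dot3 (N r) (pdx φ r)) q (0, 1) = 0 :=
      pd_const_on hUopen hq 0 hNφx (0, 1)
    rw [fderiv_dot3 (hNd q hq) (pdx_differentiableAt (hφc q hq)) (0, 1)] at h1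
    have h2 : fderiv ℝ (fun r => dot3 (N r) (pdy φ r)) q (1, 0) = 0 :=
      pd_const_on hUopen hq 0 hNφy (1, 0)
    rw [fderiv_dot3 (hNd q hq) (pdy_differentiableAt (hφc q hq)) (1, 0)] at h2
    have hcl : pdx (pdy φ) q = pdy (pdx φ) q := clairaut (hφc q hq)
    have hfq : dot3 (pdx N q) (pdy φ q) = 0 := by have := hf q hq; linarith
    have e1 : dot3 (pdy N q) (pdx φ q) + dot3 (N q) (pdy (pdx φ) q) = 0 := h1
    have e2 : dot3 (pdx N q) (pdy φ q) + dot3 (N q) (pdx (pdy φ) q) = 0 := h2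
    rw [hcl] at e2
    linarith
  -- the normal as a cross product:  φx ⨯₃ φy = s • N
  have hcross : ∀ q ∈ U,
      pdx φ q ⨯₃ pdy φ q = dot3 (N q) (pdx φ q ⨯₃ pdy φ q) • N q := by
    intro q hq
    set s := dot3 (N q) (pdx φ q ⨯₃ pdy φ q) with hsdef
    have hv : pdx φ q ⨯₃ pdy φ q - s • N q = 0 := by
      apply eq_zero_of_dots (N q) (pdx φ q) (pdy φ q) _ (horient q hq).ne'
      · rw [dot3_sub_left, dot3_smul_left, hNunit q hq,
          dot3_comm (pdx φ q ⨯₃ pdy φ q) (N q), ← hsdef]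
        ring
      · rw [dot3_sub_left, dot3_smul_left, cross_dot_self_left, hNφx q hq]
        ring
      · rw [dot3_sub_left, dot3_smul_left, cross_dot_self_right, hNφy q hq]
        ring
    exact sub_eq_zero.1 hv
  -- e = c * s
  have hecs : ∀ q ∈ U,
      -dot3 (pdx N q) (pdx φ q) = c * dot3 (N q) (pdx φ q ⨯₃ pdy φ q) := by
    intro q hq
    set s := dot3 (N q) (pdx φ q ⨯₃ pdy φ q) with hsdef
    set e := -dot3 (pdx N q) (pdx φ q) with hedef
    have hspos : 0 < s := horient q hq
    have hs2 : dot3 (pdx φ q) (pdx φ q) * dot3 (pdy φ q) (pdy φ q)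
        - dot3 (pdx φ q) (pdy φ q) ^ 2 = s ^ 2 := by
      have h1 := lagrange3 (pdx φ q) (pdy φ q)
      have h2 : dot3 (pdx φ q ⨯₃ pdy φ q) (pdx φ q ⨯₃ pdy φ q) = s ^ 2 := by
        rw [hcross q hq, ← hsdef, dot3_smul_left, dot3_comm, dot3_smul_left,
          hNunit q hq]
        ring
      linarith
    have hKq := hK q hq
    rw [← heg q hq, hf q hq, hs2] at hKq
    have he2 : e ^ 2 = K * s ^ 2 := by
      have hs2ne : s ^ 2 ≠ 0 := pow_ne_zero 2 hspos.ne'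
      rw [div_eq_iff hs2ne] at hKq
      linear_combination hKq
    have hcs2 : (c * s) ^ 2 = K * s ^ 2 := by
      rw [mul_pow, hcdef, Real.sq_sqrt hKpos.le]
    have hprod : (e - c * s) * (e + c * s) = 0 := by linear_combination he2 - hcs2
    rcases mul_eq_zero.1 hprod with h | h
    · linarith
    · nlinarith [hepos q hq, mul_pos hcpos hspos]
  -- the key first-order identities
  have key1 : ∀ q ∈ U, pdx N q = c • (N q ⨯₃ pdy φ q) := by
    intro q hq
    have hv : pdx N q - c • (N q ⨯₃ pdy φ q) = 0 := by
      apply eq_zero_of_dots (N q) (pdx φ q) (pdy φ q) _ (horient q hq).ne'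
      · rw [dot3_sub_left, dot3_smul_left, hNxN q hq, cross_dot_self_left]
        ring
      · rw [dot3_sub_left, dot3_smul_left, cross_dot₁]
        have := hecs q hq
        linarith
      · rw [dot3_sub_left, dot3_smul_left, cross_dot_self_right]
        have := hf q hq
        linarith
    exact sub_eq_zero.1 hv
  have key2 : ∀ q ∈ U, pdy N q = (-c) • (N q ⨯₃ pdx φ q) := by
    intro q hq
    have hv : pdy N q - (-c) • (N q ⨯₃ pdx φ q) = 0 := by
      apply eq_zero_of_dots (N q) (pdx φ q) (pdy φ q) _ (horient q hq).ne'
      · rw [dot3_sub_left, dot3_smul_left, hNyN q hq, cross_dot_self_left]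
        ring
      · rw [dot3_sub_left, dot3_smul_left, cross_dot_self_right, hNyφx q hq]
        ring
      · rw [dot3_sub_left, dot3_smul_left, cross_dot₂]
        have h1 := hecs q hq
        have h2 := heg q hq
        linarith
    exact sub_eq_zero.1 hv
  -- differentiate the key identities
  have hA : pdx (pdx N) p
      = c • (pdx N p ⨯₃ pdy φ p) + c • (N p ⨯₃ pdx (pdy φ) p) := by
    have heva : pdx N =ᶠ[nhds p] fun q => (c • crossC) (N q) (pdy φ q) := by
      refine Filter.eventuallyEq_of_mem (hUopen.mem_nhds hp) fun q hq => ?_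
      simp [key1 q hq]
    have : pdx (pdx N) p = fderiv ℝ (fun q => (c • crossC) (N q) (pdy φ q)) p (1, 0) := by
      show fderiv ℝ (pdx N) p (1, 0) = _
      rw [heva.fderiv_eq]
    rw [this, fderiv_bilin (c • crossC) (hNd p hp) (pdy_differentiableAt (hφc p hp)) (1, 0)]
    simp [pdx, pdy]
  have hB : pdy (pdy N) p
      = (-c) • (pdy N p ⨯₃ pdx φ p) + (-c) • (N p ⨯₃ pdy (pdx φ) p) := by
    have hevb : pdy N =ᶠ[nhds p] fun q => ((-c) • crossC) (N q) (pdx φ q) := by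
      refine Filter.eventuallyEq_of_mem (hUopen.mem_nhds hp) fun q hq => ?_
      simp [key2 q hq]
    have : pdy (pdy N) p = fderiv ℝ (fun q => ((-c) • crossC) (N q) (pdx φ q)) p (0, 1) := by
      show fderiv ℝ (pdy N) p (0, 1) = _
      rw [hevb.fderiv_eq]
    rw [this, fderiv_bilin ((-c) • crossC) (hNd p hp) (pdx_differentiableAt (hφc p hp)) (0, 1)]
    simp [pdx, pdy]
  have hclφ : pdx (pdy φ) p = pdy (pdx φ) p := clairaut (hφc p hp)
  have hsum : pdx (pdx N) p + pdy (pdy N) p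
      = c • ((c • (N p ⨯₃ pdy φ p)) ⨯₃ pdy φ p)
        + c • ((c • (N p ⨯₃ pdx φ p)) ⨯₃ pdx φ p) := by
    rw [hA, hB, hclφ, key1 p hp, key2 p hp]
    simp only [cross_smul_left]
    module
  rw [hsum]
  exact final_alg (N p) (pdx φ p) (pdy φ p) c (hNφx p hp) (hNφy p hp)
end
end

section
/- Let ψ, N, K be as in the negative-curvature 𝕊³ setup. Then on all of U: ψᵤ = (1/√(−K)) · ψ · ((ψ̄N) ⊠ (ψ̄Nᵤ)) and ψᵥ = −(1/√(−K)) · ψ · ((ψ̄N) ⊠ (ψ̄Nᵥ)), where for quaternions p, q one sets p ⊠ q := (1/2)(pq − qp) (the cross product of imaginary quaternions) and all products are quaternion products. -/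
noncomputable section

open scoped RealInnerProductSpace Quaternion
open Complex

/-- Wirtinger derivative ∂/∂z = (1/2)(∂ₓ - i ∂ᵧ). -/
def dz (f : ℝ × ℝ → ℂ) (p : ℝ × ℝ) : ℂ := (1 / 2 : ℂ) * (pdx f p - Complex.I * pdy f p)

/-- Wirtinger derivative ∂/∂z̄ = (1/2)(∂ₓ + i ∂ᵧ). -/
def dzb (f : ℝ × ℝ → ℂ) (p : ℝ × ℝ) : ℂ := (1 / 2 : ℂ) * (pdx f p + Complex.I * pdy f p)

/-- Complex conjugate of a complex-valued map. -/
def conjf (f : ℝ × ℝ → ℂ) : ℝ × ℝ → ℂ := fun p => (starRingEnd ℂ) (f p)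

/-- Cross product of (imaginary) quaternions: p ⊠ q = (1/2)(pq - qp). -/
def qcross (p q : ℍ[ℝ]) : ℍ[ℝ] := (1 / 2 : ℝ) • (p * q - q * p)

def qi : ℍ[ℝ] := ⟨0, 1, 0, 0⟩
def qj : ℍ[ℝ] := ⟨0, 0, 1, 0⟩
def qk : ℍ[ℝ] := ⟨0, 0, 0, 1⟩

/-- Left translation of the normal to the identity: Nᵉ = ψ̄ N. -/
def NeQ (ψ N : ℝ × ℝ → ℍ[ℝ]) (p : ℝ × ℝ) : ℍ[ℝ] := star (ψ p) * N p

/-- First component N₁ of Nᵉ = N₁ j + N₂ k + N₃ i. -/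
def gN1 (ψ N : ℝ × ℝ → ℍ[ℝ]) (p : ℝ × ℝ) : ℝ := (NeQ ψ N p).imJ

/-- Second component N₂ of Nᵉ = N₁ j + N₂ k + N₃ i. -/
def gN2 (ψ N : ℝ × ℝ → ℍ[ℝ]) (p : ℝ × ℝ) : ℝ := (NeQ ψ N p).imK

/-- Third component N₃ of Nᵉ = N₁ j + N₂ k + N₃ i. -/
def gN3 (ψ N : ℝ × ℝ → ℍ[ℝ]) (p : ℝ × ℝ) : ℝ := (NeQ ψ N p).imI

/-- The Gauss map g = (N₁ + i N₂)/(1 - N₃). -/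
def gauss (ψ N : ℝ × ℝ → ℍ[ℝ]) (p : ℝ × ℝ) : ℂ :=
  ((gN1 ψ N p : ℂ) + (gN2 ψ N p : ℂ) * Complex.I) / (1 - (gN3 ψ N p : ℂ))

/-- The extrinsic curvature of a surface in 𝕊³ (unit quaternions). -/
def extKq (ψ N : ℝ × ℝ → ℍ[ℝ]) (p : ℝ × ℝ) : ℝ :=
  ((-⟪pdx N p, pdx ψ p⟫) * (-⟪pdy N p, pdy ψ p⟫) - (-⟪pdx N p, pdy ψ p⟫) ^ 2) /
    (⟪pdx ψ p, pdx ψ p⟫ * ⟪pdy ψ p, pdy ψ p⟫ - ⟪pdx ψ p, pdy ψ p⟫ ^ 2)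

/-- Auxiliary: the real part of a quaternion product is symmetric. -/
lemma re_mul_comm' (p q : ℍ[ℝ]) : (p * q).re = (q * p).re := by
  simp [Quaternion.re_mul]; ring

/-- Auxiliary: left multiplication by the conjugate of a unit quaternion preserves inner. -/
lemma inner_star_mul' (P x y : ℍ[ℝ]) (h : Quaternion.normSq P = 1) :
    ⟪star P * x, star P * y⟫ = ⟪x, y⟫ := by
  rw [Quaternion.inner_def, Quaternion.inner_def, star_mul, star_star,
    mul_assoc, re_mul_comm', mul_assoc x, mul_assoc (star y), Quaternion.self_mul_star, h]
  norm_num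

lemma re_star_mul' (P x : ℍ[ℝ]) : (star P * x).re = ⟪x, P⟫ := by
  rw [Quaternion.inner_def, re_mul_comm']

/-- Auxiliary: BAC-CAB identity for the quaternionic cross product of imaginary quaternions. -/
lemma bac_cab' (a b m : ℍ[ℝ]) (ha : a.re = 0) (hb : b.re = 0) (hm : m.re = 0) :
    qcross (qcross a b) m = ⟪m, a⟫ • b - ⟪m, b⟫ • a := by
  ext <;> simp [qcross, Quaternion.inner_def, Quaternion.re_mul, Quaternion.imI_mul,
    Quaternion.imJ_mul, Quaternion.imK_mul, ha, hb, hm] <;> ring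

/-- Auxiliary: Lagrange identity for the quaternionic cross product. -/
lemma lagrange' (a b : ℍ[ℝ]) (ha : a.re = 0) (hb : b.re = 0) :
    ⟪qcross a b, qcross a b⟫ = ⟪a, a⟫ * ⟪b, b⟫ - ⟪a, b⟫ ^ 2 := by
  simp [-inner_self_eq_norm_sq_to_K, qcross, Quaternion.inner_def, Quaternion.re_mul, Quaternion.imI_mul,
    Quaternion.imJ_mul, Quaternion.imK_mul, ha, hb]
  ring

lemma qcross_smul_left' (r : ℝ) (p q : ℍ[ℝ]) : qcross (r • p) q = r • qcross p q := by
  simp [qcross, smul_mul_assoc, mul_smul_comm, smul_sub, smul_smul]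
  module

lemma qcross_re' (p q : ℍ[ℝ]) : (qcross p q).re = 0 := by
  simp [qcross, Quaternion.re_mul]; ring

lemma fderiv_zero_of_const_on' {U : Set (ℝ × ℝ)} (hU : IsOpen U) {p : ℝ × ℝ} (hp : p ∈ U)
    {g : ℝ × ℝ → ℝ} {c : ℝ} (h : ∀ q ∈ U, g q = c) : fderiv ℝ g p = 0 := by
  have he : g =ᶠ[nhds p] fun _ => c := Filter.eventuallyEq_of_mem (hU.mem_nhds hp) h
  rw [he.fderiv_eq]
  exact fderiv_const_apply c

set_option maxHeartbeats 1000000 in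
theorem stmt15
    (U : Set (ℝ × ℝ)) (hUopen : IsOpen U) (hUconn : IsConnected U)
    (ψ N : ℝ × ℝ → ℍ[ℝ])
    (hψ : ContDiffOn ℝ (⊤ : ℕ∞) ψ U) (hN : ContDiffOn ℝ (⊤ : ℕ∞) N U)
    (hψnorm : ∀ p ∈ U, ‖ψ p‖ = 1)
    (himm : ∀ p ∈ U, LinearIndependent ℝ ![pdx ψ p, pdy ψ p])
    (hNnorm : ∀ p ∈ U, ‖N p‖ = 1)
    (hNψ : ∀ p ∈ U, ⟪N p, ψ p⟫ = 0)
    (hNψu : ∀ p ∈ U, ⟪N p, pdx ψ p⟫ = 0)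
    (hNψv : ∀ p ∈ U, ⟪N p, pdy ψ p⟫ = 0)
    (horient : ∀ p ∈ U,
      0 < ⟪star (ψ p) * N p, qcross (star (ψ p) * pdx ψ p) (star (ψ p) * pdy ψ p)⟫)
    -- (u,v) are proper null coordinates for the second fundamental form, N compatible:
    -- e ≡ 0, g₂ ≡ 0, f > 0
    (he : ∀ p ∈ U, -⟪pdx N p, pdx ψ p⟫ = 0)
    (hg2 : ∀ p ∈ U, -⟪pdy N p, pdy ψ p⟫ = 0)
    (hfpos : ∀ p ∈ U, 0 < -⟪pdx N p, pdy ψ p⟫)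
    -- the (negative) extrinsic curvature K = -f²/(EG - F²)
    (K : ℝ × ℝ → ℝ)
    (hK : ∀ p ∈ U, K p = -(-⟪pdx N p, pdy ψ p⟫) ^ 2 /
      (⟪pdx ψ p, pdx ψ p⟫ * ⟪pdy ψ p, pdy ψ p⟫ - ⟪pdx ψ p, pdy ψ p⟫ ^ 2))
    :
    ∀ p ∈ U,
      pdx ψ p = (1 / Real.sqrt (-K p)) •
          (ψ p * qcross (star (ψ p) * N p) (star (ψ p) * pdx N p)) ∧
      pdy ψ p = -((1 / Real.sqrt (-K p)) •
          (ψ p * qcross (star (ψ p) * N p) (star (ψ p) * pdy N p))) := by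
  intro p hp
  -- Smoothness and differentiability facts at p
  have hψp : ContDiffAt ℝ (⊤ : ℕ∞) ψ p := (hψ p hp).contDiffAt (hUopen.mem_nhds hp)
  have hNp : ContDiffAt ℝ (⊤ : ℕ∞) N p := (hN p hp).contDiffAt (hUopen.mem_nhds hp)
  have dψ : DifferentiableAt ℝ ψ p := hψp.differentiableAt (by simp)
  have dN : DifferentiableAt ℝ N p := hNp.differentiableAt (by simp)
  have dψ' : DifferentiableAt ℝ (fderiv ℝ ψ) p :=
    (hψp.fderiv_right (m := 1) (WithTop.coe_le_coe.mpr le_top)).differentiableAt one_ne_zero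
  have dpdxψ : DifferentiableAt ℝ (pdx ψ) p := dψ'.clm_apply (differentiableAt_const _)
  have dpdyψ : DifferentiableAt ℝ (pdy ψ) p := dψ'.clm_apply (differentiableAt_const _)
  -- ψ ⊥ ψ_u, ψ ⊥ ψ_v
  have hz1 : fderiv ℝ (fun q => ⟪ψ q, ψ q⟫) p = 0 :=
    fderiv_zero_of_const_on' (c := 1) hUopen hp (fun q hq => by
      simp [real_inner_self_eq_norm_sq, hψnorm q hq])
  have hψu0 : ⟪ψ p, pdx ψ p⟫ = 0 := by
    have h := fderiv_inner_apply (𝕜 := ℝ) dψ dψ (1, 0)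
    rw [hz1] at h
    simp only [ContinuousLinearMap.zero_apply] at h
    rw [real_inner_comm (ψ p)] at h
    have hx : ⟪ψ p, fderiv ℝ ψ p ((1:ℝ),(0:ℝ))⟫ = 0 := by linarith
    exact hx
  have hψv0 : ⟪ψ p, pdy ψ p⟫ = 0 := by
    have h := fderiv_inner_apply (𝕜 := ℝ) dψ dψ (0, 1)
    rw [hz1] at h
    simp only [ContinuousLinearMap.zero_apply] at h
    rw [real_inner_comm (ψ p)] at h
    have hx : ⟪ψ p, fderiv ℝ ψ p ((0:ℝ),(1:ℝ))⟫ = 0 := by linarith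
    exact hx
  -- N_u ⊥ ψ, N_v ⊥ ψ
  have hz2 : fderiv ℝ (fun q => ⟪N q, ψ q⟫) p = 0 :=
    fderiv_zero_of_const_on' hUopen hp hNψ
  have hNu0 : ⟪pdx N p, ψ p⟫ = 0 := by
    have h := fderiv_inner_apply (𝕜 := ℝ) dN dψ (1, 0)
    rw [hz2] at h
    simp only [ContinuousLinearMap.zero_apply] at h
    have := hNψu p hp
    unfold pdx at this ⊢
    linarith [h, this]
  have hNv0 : ⟪pdy N p, ψ p⟫ = 0 := by
    have h := fderiv_inner_apply (𝕜 := ℝ) dN dψ (0, 1)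
    rw [hz2] at h
    simp only [ContinuousLinearMap.zero_apply] at h
    have := hNψv p hp
    unfold pdy at this ⊢
    linarith [h, this]
  -- symmetry of the second fundamental form
  have hsymm : IsSymmSndFDerivAt ℝ ψ p := hψp.isSymmSndFDerivAt (by rw [minSmoothness_of_isRCLikeNormedField]; exact WithTop.coe_le_coe.mpr le_top)
  have hmix : fderiv ℝ (pdx ψ) p (0, 1) = fderiv ℝ (pdy ψ) p (1, 0) := by
    have e1 : fderiv ℝ (pdx ψ) p = (fderiv ℝ ψ p).comp
        (fderiv ℝ (fun _ : ℝ × ℝ => ((1:ℝ), (0:ℝ))) p)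
        + (fderiv ℝ (fderiv ℝ ψ) p).flip ((1:ℝ), (0:ℝ)) :=
      fderiv_clm_apply dψ' (differentiableAt_const _)
    have e2 : fderiv ℝ (pdy ψ) p = (fderiv ℝ ψ p).comp
        (fderiv ℝ (fun _ : ℝ × ℝ => ((0:ℝ), (1:ℝ))) p)
        + (fderiv ℝ (fderiv ℝ ψ) p).flip ((0:ℝ), (1:ℝ)) :=
      fderiv_clm_apply dψ' (differentiableAt_const _)
    rw [e1, e2]
    simp [hsymm.eq (0,1) (1,0)]
  have hsym : ⟪pdy N p, pdx ψ p⟫ = ⟪pdx N p, pdy ψ p⟫ := by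
    have hzA : fderiv ℝ (fun q => ⟪N q, pdx ψ q⟫) p = 0 :=
      fderiv_zero_of_const_on' hUopen hp hNψu
    have hzB : fderiv ℝ (fun q => ⟪N q, pdy ψ q⟫) p = 0 :=
      fderiv_zero_of_const_on' hUopen hp hNψv
    have hA := fderiv_inner_apply (𝕜 := ℝ) dN dpdxψ (0, 1)
    have hB := fderiv_inner_apply (𝕜 := ℝ) dN dpdyψ (1, 0)
    rw [hzA] at hA; rw [hzB] at hB
    simp only [ContinuousLinearMap.zero_apply] at hA hB
    rw [hmix] at hA
    simp only [pdx, pdy] at hA hB ⊢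
    linarith [hA, hB]
  -- Algebraic part
  have hP1 : Quaternion.normSq (ψ p) = 1 := by
    rw [Quaternion.normSq_eq_norm_mul_self, hψnorm p hp]; norm_num
  have hPstar : ψ p * star (ψ p) = 1 := by
    rw [Quaternion.self_mul_star, hP1]; simp
  have hq : ∀ x y : ℍ[ℝ], ⟪star (ψ p) * x, star (ψ p) * y⟫ = ⟪x, y⟫ :=
    fun x y => inner_star_mul' (ψ p) x y hP1
  have hffpos : 0 < -⟪pdx N p, pdy ψ p⟫ := hfpos p hp
  set a := star (ψ p) * pdx ψ p with ha
  set b := star (ψ p) * pdy ψ p with hb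
  set n := star (ψ p) * N p with hn
  set m := star (ψ p) * pdx N p with hm
  set m' := star (ψ p) * pdy N p with hm'
  have rea : a.re = 0 := by
    rw [ha, re_star_mul', real_inner_comm]; exact hψu0
  have reb : b.re = 0 := by
    rw [hb, re_star_mul', real_inner_comm]; exact hψv0
  have ren : n.re = 0 := by
    rw [hn, re_star_mul']; exact hNψ p hp
  have rem : m.re = 0 := by
    rw [hm, re_star_mul']; exact hNu0
  have rem' : m'.re = 0 := by
    rw [hm', re_star_mul']; exact hNv0
  have hnn : ⟪n, n⟫ = 1 := by
    rw [hn, hq, real_inner_self_eq_norm_sq, hNnorm p hp]; norm_num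
  have hna : ⟪n, a⟫ = 0 := by rw [hn, ha, hq]; exact hNψu p hp
  have hnb : ⟪n, b⟫ = 0 := by rw [hn, hb, hq]; exact hNψv p hp
  have hma : ⟪m, a⟫ = 0 := by
    rw [hm, ha, hq]; have := he p hp; linarith
  have hmb : ⟪m, b⟫ = ⟪pdx N p, pdy ψ p⟫ := by rw [hm, hb, hq]
  have hm'b : ⟪m', b⟫ = 0 := by
    rw [hm', hb, hq]; have := hg2 p hp; linarith
  have hm'a : ⟪m', a⟫ = ⟪pdx N p, pdy ψ p⟫ := by rw [hm', ha, hq]; exact hsym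
  -- orientation: μ > 0
  have hμpos : 0 < ⟪qcross a b, n⟫ := by
    rw [real_inner_comm, hn, ha, hb]; exact horient p hp
  have hμne : ⟪qcross a b, n⟫ ≠ 0 := ne_of_gt hμpos
  -- a ⊠ b is parallel to n
  have hun : qcross (qcross a b) n = 0 := by
    rw [bac_cab' a b n rea reb ren, hna, hnb]; simp
  have huu : ⟪qcross a b, qcross a b⟫ = ⟪qcross a b, n⟫ ^ 2 := by
    have hl := lagrange' (qcross a b) n (qcross_re' a b) ren
    rw [hun, hnn] at hl
    simp only [inner_zero_left, mul_one] at hl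
    linarith [hl]
  have hu_eq : qcross a b = ⟪qcross a b, n⟫ • n := by
    have h0 : ⟪qcross a b - ⟪qcross a b, n⟫ • n,
        qcross a b - ⟪qcross a b, n⟫ • n⟫ = (0:ℝ) := by
      rw [inner_sub_left, inner_sub_right, inner_sub_right, real_inner_smul_left,
        real_inner_smul_left, real_inner_smul_right, real_inner_smul_right, huu, hnn,
        real_inner_comm n (qcross a b)]
      ring
    exact sub_eq_zero.mp (inner_self_eq_zero.mp h0)
  -- μ² = EG - F²
  have hWμ : ⟪qcross a b, n⟫ ^ 2 =
      ⟪pdx ψ p, pdx ψ p⟫ * ⟪pdy ψ p, pdy ψ p⟫ - ⟪pdx ψ p, pdy ψ p⟫ ^ 2 := by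
    have hl := lagrange' a b rea reb
    rw [huu] at hl
    rw [hl, ha, hb, hq, hq, hq]
  -- the two key cross-product identities
  have hk1 : ⟪qcross a b, n⟫ • qcross n m = (-⟪pdx N p, pdy ψ p⟫) • a := by
    have h1 : qcross (qcross a b) m = (-⟪pdx N p, pdy ψ p⟫) • a := by
      rw [bac_cab' a b m rea reb rem, hma, hmb]
      module
    rwa [hu_eq, qcross_smul_left'] at h1
  have hk2 : ⟪qcross a b, n⟫ • qcross n m' = -((-⟪pdx N p, pdy ψ p⟫) • b) := by
    have h1 : qcross (qcross a b) m' = -((-⟪pdx N p, pdy ψ p⟫) • b) := by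
      rw [bac_cab' a b m' rea reb rem', hm'a, hm'b]
      module
    rwa [hu_eq, qcross_smul_left'] at h1
  -- the square root of -K
  have hsq : Real.sqrt (-K p) = (-⟪pdx N p, pdy ψ p⟫) / ⟪qcross a b, n⟫ := by
    have hKp := hK p hp
    have h2 : -K p = ((-⟪pdx N p, pdy ψ p⟫) / ⟪qcross a b, n⟫) ^ 2 := by
      rw [hKp, ← hWμ]
      field_simp
    rw [h2, Real.sqrt_sq (le_of_lt (div_pos hffpos hμpos))]
  have hcoefne : (-⟪pdx N p, pdy ψ p⟫) / ⟪qcross a b, n⟫ ≠ 0 :=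
    ne_of_gt (div_pos hffpos hμpos)
  have hqnm : qcross n m = ((-⟪pdx N p, pdy ψ p⟫) / ⟪qcross a b, n⟫) • a := by
    have h2 : ((⟪qcross a b, n⟫)⁻¹ * ⟪qcross a b, n⟫) • qcross n m
        = (⟪qcross a b, n⟫)⁻¹ • ((-⟪pdx N p, pdy ψ p⟫) • a) := by
      rw [mul_smul, hk1]
    rw [inv_mul_cancel₀ hμne, one_smul] at h2
    rw [h2, smul_smul]
    congr 1
    field_simp
  have hqnm' : qcross n m' = -(((-⟪pdx N p, pdy ψ p⟫) / ⟪qcross a b, n⟫) • b) := by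
    have h2 : ((⟪qcross a b, n⟫)⁻¹ * ⟪qcross a b, n⟫) • qcross n m'
        = (⟪qcross a b, n⟫)⁻¹ • (-((-⟪pdx N p, pdy ψ p⟫) • b)) := by
      rw [mul_smul, hk2]
    rw [inv_mul_cancel₀ hμne, one_smul] at h2
    rw [h2, smul_neg, smul_smul]
    congr 2
    field_simp
  constructor
  · rw [hsq, hqnm, mul_smul_comm, smul_smul, one_div, inv_mul_cancel₀ hcoefne, one_smul,
      ha, ← mul_assoc, hPstar, one_mul]
  · rw [hsq, hqnm', mul_neg, smul_neg, mul_smul_comm, smul_smul, one_div,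
      inv_mul_cancel₀ hcoefne, one_smul, hb, ← mul_assoc, hPstar, one_mul, neg_neg]
end
end
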